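/- Let A = ℤ[t₁,…,tₙ, γ₁,…,γₙ]/I where I is generated by cᵢ − 2γᵢ (1 ≤ i ≤ n) with cᵢ = eᵢ(t₁,…,tₙ), together with γ_{2k} + Σ_{i=1}^{2k−1} (−1)ⁱ γᵢ γ_{2k−i} for 1 ≤ k ≤ n (with γ_j = 0 for j > n). Then the quotient of A by the ideal generated by t₁,…,tₙ is isomorphic to ℤ[γ₁,…,γₙ]/J where J is generated by 2γᵢ (1 ≤ i ≤ n) and γ_{2k} + Σ_{i=1}^{2k−1}(−1)ⁱ γᵢγ_{2k−i} (1 ≤ k ≤ n). -/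

import Mathlib

/-!
Setting the variables `tᵢ` to zero is a surjection `ℤ[t, γ] → ℤ[γ]` with kernel `(t₁, …, tₙ)`,
so the quotient of `A` by the `tᵢ` is `ℤ[γ]` modulo the image of `I`. Every monomial of
`cᵢ = eᵢ(t)` contains some `t`, so `cᵢ - 2γᵢ ↦ -2γᵢ`, while the quadratic relations among the
`γ`'s are mapped to themselves: the image of `I` is exactly `J`.
-/

open MvPolynomial Finset

/-- In `ℤ[t₁,…,tₙ,γ₁,…,γₙ]` (the `t`'s are `X (Sum.inl i)`, the `γ`'s are
`X (Sum.inr j)`): `γ_j` with the convention `γ_j = 0` for `j = 0` or `j > n`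
(1-based indexing). -/
noncomputable def gam9 (n : ℕ) (j : ℕ) : MvPolynomial (Fin n ⊕ Fin n) ℤ :=
  if h : 1 ≤ j ∧ j ≤ n then X (Sum.inr ⟨j - 1, by omega⟩) else 0

/-- `c_k = e_k(t₁,…,tₙ)`. -/
noncomputable def c9 (n : ℕ) (k : ℕ) : MvPolynomial (Fin n ⊕ Fin n) ℤ :=
  ∑ A ∈ (univ : Finset (Fin n)).powersetCard k, ∏ i ∈ A, X (Sum.inl i)

/-- The ideal `I` generated by `cᵢ - 2γᵢ` (`1 ≤ i ≤ n`) and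
`γ_{2k} + Σ_{i=1}^{2k-1} (-1)ⁱ γᵢ γ_{2k-i}` (`1 ≤ k ≤ n`). -/
noncomputable def I9 (n : ℕ) : Ideal (MvPolynomial (Fin n ⊕ Fin n) ℤ) :=
  Ideal.span
    ((Set.range fun i : Fin n => c9 n (i + 1) - 2 * gam9 n (i + 1)) ∪
     (Set.range fun k : Fin n => gam9 n (2 * ((k : ℕ) + 1)) +
        ∑ i ∈ Icc 1 (2 * ((k : ℕ) + 1) - 1),
          C ((-1 : ℤ) ^ i) * (gam9 n i * gam9 n (2 * ((k : ℕ) + 1) - i))))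

/-- `γ_j` in the target ring `ℤ[γ₁,…,γₙ]`, with `γ_j = 0` for `j > n`. -/
noncomputable def gam9' (n : ℕ) (j : ℕ) : MvPolynomial (Fin n) ℤ :=
  if h : 1 ≤ j ∧ j ≤ n then X ⟨j - 1, by omega⟩ else 0

/-- The ideal `J` of `ℤ[γ₁,…,γₙ]` generated by `2γᵢ` (`1 ≤ i ≤ n`) and
`γ_{2k} + Σ_{i=1}^{2k-1} (-1)ⁱ γᵢ γ_{2k-i}` (`1 ≤ k ≤ n`). -/
noncomputable def J9 (n : ℕ) : Ideal (MvPolynomial (Fin n) ℤ) :=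
  Ideal.span
    ((Set.range fun i : Fin n => 2 * gam9' n (i + 1)) ∪
     (Set.range fun k : Fin n => gam9' n (2 * ((k : ℕ) + 1)) +
        ∑ i ∈ Icc 1 (2 * ((k : ℕ) + 1) - 1),
          C ((-1 : ℤ) ^ i) * (gam9' n i * gam9' n (2 * ((k : ℕ) + 1) - i))))

noncomputable def RingHom.quotientSupKerEquivOfSurjective {A B : Type*} [CommRing A] [CommRing B]
    (φ : A →+* B) (hφ : Function.Surjective φ) (I : Ideal A) :
    A ⧸ (I ⊔ RingHom.ker φ) ≃+* B ⧸ I.map φ :=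
  (Ideal.quotEquivOfEq <| by
      rw [← RingHom.comap_ker, Ideal.mk_ker, Ideal.comap_map_of_surjective φ hφ,
        RingHom.ker_eq_comap_bot]).trans
    (RingHom.quotientKerEquivOfSurjective (f := (Ideal.Quotient.mk (I.map φ)).comp φ)
      (Ideal.Quotient.mk_surjective.comp hφ))

namespace MvPolynomial

variable {R : Type*} [CommRing R] {σ τ : Type*} {f : σ → τ} (hf : Function.Injective f)

theorem killCompl_X_of_notMem_range {i : τ} (hi : i ∉ Set.range f) :
    killCompl (R := R) hf (X i) = 0 := by
  simp [killCompl, hi]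

theorem killCompl_surjective : Function.Surjective (killCompl (R := R) hf) :=
  fun p => ⟨rename f p, killCompl_rename_app hf p⟩

theorem ker_killCompl :
    RingHom.ker (killCompl (R := R) hf) = Ideal.span (X '' (Set.range f)ᶜ) := by
  set T : Ideal (MvPolynomial τ R) := Ideal.span (X '' (Set.range f)ᶜ)
  refine le_antisymm (fun p hp => ?_) (Ideal.span_le.mpr ?_)
  · -- modulo `T`, every polynomial agrees with the renaming of its image under `killCompl`
    have hsection : (Ideal.Quotient.mk T).comp
        ((rename f).toRingHom.comp (killCompl (R := R) hf).toRingHom) = Ideal.Quotient.mk T := by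
      refine ringHom_ext (fun r => by simp) (fun i => ?_)
      by_cases hi : i ∈ Set.range f
      · obtain ⟨a, rfl⟩ := hi
        have h := killCompl_rename_app (R := R) hf (X a)
        rw [rename_X] at h
        simp [h]
      · simp only [RingHom.comp_apply, AlgHom.toRingHom_eq_coe, RingHom.coe_coe,
          killCompl_X_of_notMem_range hf hi, map_zero]
        exact (Ideal.Quotient.eq_zero_iff_mem.mpr
          (Ideal.subset_span (Set.mem_image_of_mem X hi))).symm
    rw [← Ideal.Quotient.eq_zero_iff_mem, ← hsection]
    simp [RingHom.mem_ker.mp hp]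
  · rintro _ ⟨i, hi, rfl⟩
    exact killCompl_X_of_notMem_range hf hi

theorem ker_killCompl_inr :
    RingHom.ker (killCompl (R := R) (Sum.inr_injective : Function.Injective (@Sum.inr σ τ))) =
      Ideal.span (Set.range fun i : σ => X (Sum.inl i)) := by
  rw [ker_killCompl, Set.compl_range_inr, ← Set.range_comp]
  rfl

end MvPolynomial

noncomputable abbrev killT (n : ℕ) :
    MvPolynomial (Fin n ⊕ Fin n) ℤ →ₐ[ℤ] MvPolynomial (Fin n) ℤ :=
  killCompl Sum.inr_injective

theorem rename_inr_gam9' (n j : ℕ) : rename Sum.inr (gam9' n j) = gam9 n j := by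
  unfold gam9 gam9'
  split_ifs <;> simp

theorem killT_gam9 (n j : ℕ) : killT n (gam9 n j) = gam9' n j := by
  rw [← rename_inr_gam9', killCompl_rename_app]

theorem killT_c9 (n : ℕ) {k : ℕ} (hk : k ≠ 0) : killT n (c9 n k) = 0 := by
  refine (map_sum _ _ _).trans (sum_eq_zero fun A hA => ?_)
  obtain ⟨a, ha⟩ : A.Nonempty := by
    rw [← card_pos, (mem_powersetCard.mp hA).2]
    omega
  rw [map_prod]
  exact prod_eq_zero ha (killCompl_X_of_notMem_range _ (by simp))

theorem map_killT_I9 (n : ℕ) : (I9 n).map (killT n) = J9 n := by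
  rw [I9, J9, Ideal.map_span, Set.image_union, ← Set.range_comp, ← Set.range_comp,
    Ideal.span_union, Ideal.span_union]
  congr 1
  · have hneg : Set.range (killT n ∘ fun i : Fin n => c9 n (i + 1) - 2 * gam9 n (i + 1)) =
        -Set.range fun i : Fin n => 2 * gam9' n (i + 1) := by
      ext p
      simp [killT_c9, killT_gam9, map_ofNat, neg_eq_iff_eq_neg]
    rw [hneg]
    exact Submodule.span_neg _
  · congr 2
    funext k
    simp [map_sum, killT_gam9]

/-- The quotient of
`A = ℤ[t₁,…,tₙ,γ₁,…,γₙ]/I` (the Toda–Watanabe presentation of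
`H*(SO(2n+1)/Tⁿ;ℤ)`) by the ideal generated by the classes of `t₁,…,tₙ` is
isomorphic to `ℤ[γ₁,…,γₙ]/J`. -/
theorem stmt9 (n : ℕ) :
    Nonempty
      (((MvPolynomial (Fin n ⊕ Fin n) ℤ ⧸ I9 n) ⧸
          Ideal.span (Set.range fun i : Fin n =>
            Ideal.Quotient.mk (I9 n) (X (Sum.inl i)))) ≃+*
        (MvPolynomial (Fin n) ℤ ⧸ J9 n)) := by
  have hT : Ideal.span (Set.range fun i : Fin n => Ideal.Quotient.mk (I9 n) (X (Sum.inl i))) =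
      (RingHom.ker (killT n)).map (Ideal.Quotient.mk (I9 n)) := by
    rw [ker_killCompl_inr, Ideal.map_span, ← Set.range_comp]
    rfl
  have hsurj : Function.Surjective
      (killT n : MvPolynomial (Fin n ⊕ Fin n) ℤ →+* MvPolynomial (Fin n) ℤ) :=
    killCompl_surjective (R := ℤ) Sum.inr_injective
  exact ⟨(Ideal.quotEquivOfEq hT).trans <| (DoubleQuot.quotQuotEquivQuotSup _ _).trans <|
    (RingHom.quotientSupKerEquivOfSurjective _ hsurj _).trans
      (Ideal.quotEquivOfEq (map_killT_I9 n))⟩
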